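/- arXiv:1605.08795 — 4 statements merged into one kernel-verified Lean document; each statement's English description precedes it below -/
import Mathlib

section
/- Let A ∈ ℝ^{m×n_A} and let B ∈ ℝ^{m×n_B} have unit-norm columns. Let OPT_k be a set of k columns of B maximizing f_A among all k-element subsets, with σ := σ_min(OPT_k) > 0. Let ε, δ > 0 with ε + δ ≤ 1 and δ < 1, and set s := ⌈n_B·log(1/δ)/k⌉. Consider the random process T_0 = ∅ and, for each step i, draw R_i uniformly at random among the size-s subsets of (columns of B) \ T_i (taking all remaining columns if fewer than s remain) and set T_{i+1} := T_i ∪ {v_i}, where v_i maximizes v ↦ f_A(T_i ∪ {v}) over v ∈ R_i (ties broken by a fixed rule). Then for every natural number r ≥ 16k/(ε·σ), E[f_A(T_r)] ≥ (1 − ε − δ)·f_A(OPT_k). -/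
open scoped RealInnerProductSpace

attribute [local instance] Classical.decEq

noncomputable def fVec {m : ℕ} (u : EuclideanSpace ℝ (Fin m))
    (S : Finset (EuclideanSpace ℝ (Fin m))) : ℝ :=
  ‖(Submodule.orthogonalProjectionOnto (Submodule.span ℝ (S : Set (EuclideanSpace ℝ (Fin m)))) u :
      EuclideanSpace ℝ (Fin m))‖ ^ 2

noncomputable def fMat {m n : ℕ} (A : Fin n → EuclideanSpace ℝ (Fin m))
    (S : Finset (EuclideanSpace ℝ (Fin m))) : ℝ :=
  ∑ j, fVec (A j) S

noncomputable def sigmaMin {m : ℕ} (S : Finset (EuclideanSpace ℝ (Fin m))) : ℝ :=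
  sInf {r : ℝ | ∃ α : S → ℝ, ∑ v, (α v) ^ 2 = 1 ∧
    r = ‖∑ v, α v • (v : EuclideanSpace ℝ (Fin m))‖ ^ 2}

noncomputable def sigmaMax {m : ℕ} (S : Finset (EuclideanSpace ℝ (Fin m))) : ℝ :=
  sSup {r : ℝ | ∃ α : S → ℝ, ∑ v, (α v) ^ 2 = 1 ∧
    r = ‖∑ v, α v • (v : EuclideanSpace ℝ (Fin m))‖ ^ 2}

def IsGreedySeq {m nA nB : ℕ} (A : Fin nA → EuclideanSpace ℝ (Fin m))
    (B : Fin nB → EuclideanSpace ℝ (Fin m))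
    (T : ℕ → Finset (EuclideanSpace ℝ (Fin m))) (b : ℕ → Fin nB) : Prop :=
  T 0 = ∅ ∧ ∀ i, T (i + 1) = insert (B (b i)) (T i) ∧
    ∀ j, fMat A (insert (B j) (T i)) ≤ fMat A (insert (B (b i)) (T i))

/-- Expected value of f_A of the (image of the) index set produced by the
lazier-than-lazy greedy process: starting from T, do r more steps; in each step
draw a uniformly random subset of the remaining column indices of size s (or
all remaining columns if fewer than s remain), and add the element of the
sample chosen by the fixed rule `pick` (intended: a maximizer of the marginal
gain). The expectation is computed recursively by averaging over the samples. -/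
noncomputable def lazyExp {m nA nB : ℕ}
    (A : Fin nA → EuclideanSpace ℝ (Fin m)) (B : Fin nB → EuclideanSpace ℝ (Fin m))
    (pick : Finset (Fin nB) → Finset (Fin nB) → Fin nB) (s : ℕ) :
    ℕ → Finset (Fin nB) → ℝ
  | 0, T => fMat A (T.image B)
  | r + 1, T =>
      (∑ R ∈ (Finset.univ \ T).powersetCard (min s (Finset.univ \ T).card),
          lazyExp A B pick s r (if R.Nonempty then insert (pick T R) T else T)) /
        (((Finset.univ \ T).powersetCard (min s (Finset.univ \ T).card)).card : ℝ)


/-!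
One step of the process raises `f_A` in expectation by at least `c · (f_A(OPT) - f_A(T))₊²`,
with `c = (1 - δ) σ / (4 k f_A(OPT))`. First, adding the elements of `OPT` to `T` one at a time
gains `σ · gap² / (4 f_A(OPT))` in total: the residuals of the columns of `A` after projecting
onto `span T` keep a large projection onto `span OPT`, and `σ_min(OPT)` turns this into large inner
products with the unit vectors of `OPT`. Second, a uniform `s`-subset of the remaining columns
meets the `o` missing elements of `OPT` with probability at least `(o / k)(1 - δ)`, and by symmetry
the element it meets is uniform among them, so the greedy choice gains `(1 - δ) / k` times that
total. As `y ↦ y / (1 + a y)` is increasing and concave, Jensen's inequality turns this one-step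
recursion for the expected gap into `gap_r ≤ f_A(OPT) / (1 + c r f_A(OPT))`, which is at most
`(ε + δ) f_A(OPT)` once `r ≥ 16 k / (ε σ)`.
-/

section Projection

variable {E : Type*} [NormedAddCommGroup E] [InnerProductSpace ℝ E]
  {U V : Submodule ℝ E} [U.HasOrthogonalProjection] [V.HasOrthogonalProjection]

theorem norm_sq_starProjection_of_le (hUV : U ≤ V) (u : E) :
    ‖V.starProjection u‖ ^ 2 =
      ‖U.starProjection u‖ ^ 2 + ‖V.starProjection (u - U.starProjection u)‖ ^ 2 := by
  have hsplit : V.starProjection u =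
      U.starProjection u + V.starProjection (u - U.starProjection u) := by
    rw [map_sub, Submodule.starProjection_eq_self_iff.2 (hUV (U.starProjection_apply_mem u))]
    abel
  have horth : ⟪U.starProjection u, V.starProjection (u - U.starProjection u)⟫ = 0 := by
    rw [← Submodule.inner_starProjection_left_eq_right,
      Submodule.starProjection_eq_self_iff.2 (hUV (U.starProjection_apply_mem u)), real_inner_comm]
    exact Submodule.starProjection_inner_eq_zero u _ (U.starProjection_apply_mem u)
  rw [hsplit, sq, sq, sq, norm_add_sq_eq_norm_sq_add_norm_sq_real horth]

theorem norm_sq_starProjection_le_of_le (hUV : U ≤ V) (u : E) :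
    ‖U.starProjection u‖ ^ 2 ≤ ‖V.starProjection u‖ ^ 2 := by
  rw [norm_sq_starProjection_of_le hUV u]
  exact le_add_of_nonneg_right (sq_nonneg _)

theorem inner_sq_le_norm_sq_starProjection_mul {v : E} (hv : v ∈ V) (u : E) :
    ⟪u, v⟫ ^ 2 ≤ ‖V.starProjection u‖ ^ 2 * ‖v‖ ^ 2 := by
  rw [← Submodule.starProjection_eq_self_iff.2 hv, ← Submodule.inner_starProjection_left_eq_right,
    Submodule.starProjection_eq_self_iff.2 hv, ← mul_pow]
  exact sq_le_sq' (neg_le_of_abs_le (abs_real_inner_le_norm _ _)) (real_inner_le_norm _ _)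

theorem inner_sq_le_sub_mul_of_le (hUV : U ≤ V) {v : E} (hv : v ∈ V) (u : E) :
    ⟪u - U.starProjection u, v⟫ ^ 2 ≤
      (‖V.starProjection u‖ ^ 2 - ‖U.starProjection u‖ ^ 2) * ‖v‖ ^ 2 := by
  rw [norm_sq_starProjection_of_le hUV u, add_sub_cancel_left]
  exact inner_sq_le_norm_sq_starProjection_mul hv _

theorem norm_sq_starProjection_sub_le (u : E) :
    ‖U.starProjection u‖ ^ 2 - ‖V.starProjection u‖ ^ 2 ≤
      2 * ‖U.starProjection u‖ * ‖U.starProjection (u - V.starProjection u)‖ := by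
  have htri : ‖U.starProjection u‖ - ‖V.starProjection u‖ ≤
      ‖U.starProjection (u - V.starProjection u)‖ := by
    have h := norm_sub_norm_le (U.starProjection u) (U.starProjection (V.starProjection u))
    rw [← map_sub] at h
    linarith [U.norm_starProjection_apply_le (V.starProjection u)]
  nlinarith [mul_le_mul_of_nonneg_left htri (norm_nonneg (U.starProjection u)),
    sq_nonneg (‖U.starProjection u‖ - ‖V.starProjection u‖)]

theorem sq_max_sum_sub_le {ι : Type*} [Fintype ι] (a : ι → E) :
    max (∑ j, ‖U.starProjection (a j)‖ ^ 2 - ∑ j, ‖V.starProjection (a j)‖ ^ 2) 0 ^ 2 ≤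
      4 * (∑ j, ‖U.starProjection (a j)‖ ^ 2) *
        ∑ j, ‖U.starProjection (a j - V.starProjection (a j))‖ ^ 2 := by
  set α := fun j => ‖U.starProjection (a j)‖
  set x := fun j => ‖U.starProjection (a j - V.starProjection (a j))‖
  have hdiff : ∑ j, ‖U.starProjection (a j)‖ ^ 2 - ∑ j, ‖V.starProjection (a j)‖ ^ 2 ≤
      2 * ∑ j, α j * x j := by
    rw [← Finset.sum_sub_distrib, Finset.mul_sum]
    refine Finset.sum_le_sum fun j _ => ?_
    rw [← mul_assoc]
    exact norm_sq_starProjection_sub_le (a j)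
  have hcs : (∑ j, α j * x j) ^ 2 ≤ (∑ j, α j ^ 2) * ∑ j, x j ^ 2 :=
    Finset.sum_mul_sq_le_sq_mul_sq _ _ _
  have hnonneg : 0 ≤ ∑ j, α j * x j :=
    Finset.sum_nonneg fun j _ => mul_nonneg (norm_nonneg _) (norm_nonneg _)
  have hmax : max (∑ j, ‖U.starProjection (a j)‖ ^ 2 - ∑ j, ‖V.starProjection (a j)‖ ^ 2) 0 ≤
      2 * ∑ j, α j * x j := max_le hdiff (by linarith)
  calc max (∑ j, ‖U.starProjection (a j)‖ ^ 2 - ∑ j, ‖V.starProjection (a j)‖ ^ 2) 0 ^ 2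
      ≤ (2 * ∑ j, α j * x j) ^ 2 := pow_le_pow_left₀ (le_max_right _ _) hmax 2
    _ ≤ 4 * (∑ j, α j ^ 2) * ∑ j, x j ^ 2 := by nlinarith

end Projection

section ProjectionGain

variable {m : ℕ}

local notation "E" => EuclideanSpace ℝ (Fin m)

theorem fVec_eq_norm_sq_starProjection (u : E) (S : Finset E) :
    fVec u S = ‖(Submodule.span ℝ (S : Set E)).starProjection u‖ ^ 2 := rfl

theorem fVec_mono (u : E) {S S' : Finset E} (h : S ⊆ S') : fVec u S ≤ fVec u S' :=
  norm_sq_starProjection_le_of_le (Submodule.span_mono (Finset.coe_subset.2 h)) u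

theorem fMat_mono {n : ℕ} (A : Fin n → E) {S S' : Finset E} (h : S ⊆ S') :
    fMat A S ≤ fMat A S' :=
  Finset.sum_le_sum fun j _ => fVec_mono (A j) h

theorem fMat_nonneg {n : ℕ} (A : Fin n → E) (S : Finset E) : 0 ≤ fMat A S :=
  Finset.sum_nonneg fun _ _ => sq_nonneg _

theorem fMat_empty {n : ℕ} (A : Fin n → E) : fMat A ∅ = 0 := by
  simp [fMat, fVec_eq_norm_sq_starProjection, Submodule.starProjection_bot]

theorem inner_sq_le_fVec_insert_sub (u v : E) (T : Finset E) :
    ⟪u - (Submodule.span ℝ (T : Set E)).starProjection u, v⟫ ^ 2 ≤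
      (fVec u (insert v T) - fVec u T) * ‖v‖ ^ 2 :=
  inner_sq_le_sub_mul_of_le (Submodule.span_mono (by simp))
    (Submodule.subset_span (by simp)) u

end ProjectionGain

section SigmaMin

variable {m : ℕ}

local notation "E" => EuclideanSpace ℝ (Fin m)

theorem sigmaMin_nonneg (S : Finset E) : 0 ≤ sigmaMin S :=
  Real.sInf_nonneg fun _ ⟨_, _, hr⟩ => hr ▸ sq_nonneg _

theorem sigmaMin_mul_sum_sq_le (S : Finset E) (α : S → ℝ) :
    sigmaMin S * ∑ v, α v ^ 2 ≤ ‖∑ v, α v • (v : E)‖ ^ 2 := by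
  obtain ht | ht := (Finset.sum_nonneg fun v _ => sq_nonneg (α v)).eq_or_lt
  · rw [← ht, mul_zero]
    positivity
  set t := ∑ v, α v ^ 2
  have hsqrt : √t ^ 2 = t := Real.sq_sqrt ht.le
  have hnormalized : ∑ v, (α v / √t) ^ 2 = 1 := by
    simp only [div_pow, ← Finset.sum_div, hsqrt]
    exact div_self ht.ne'
  have hsum : ∑ v, (α v / √t) • (v : E) = (√t)⁻¹ • ∑ v, α v • (v : E) := by
    simp only [Finset.smul_sum, smul_smul, div_eq_inv_mul]
  have hσ : sigmaMin S ≤ ‖∑ v, (α v / √t) • (v : E)‖ ^ 2 :=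
    csInf_le ⟨0, fun _ ⟨_, _, hr⟩ => hr ▸ sq_nonneg _⟩ ⟨_, hnormalized, rfl⟩
  rw [hsum, norm_smul, mul_pow, norm_inv, Real.norm_of_nonneg (Real.sqrt_nonneg t), inv_pow,
    hsqrt, inv_mul_eq_div, le_div_iff₀ ht] at hσ
  exact hσ

theorem sigmaMin_mul_norm_sq_starProjection_le (S : Finset E) (x : E) :
    sigmaMin S * ‖(Submodule.span ℝ (S : Set E)).starProjection x‖ ^ 2 ≤
      ∑ v ∈ S, ⟪x, v⟫ ^ 2 := by
  obtain ⟨α, hα⟩ := Submodule.mem_span_finset'.1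
    ((Submodule.span ℝ (S : Set E)).starProjection_apply_mem x)
  have hσ := sigmaMin_mul_sum_sq_le S α
  set p := (Submodule.span ℝ (S : Set E)).starProjection x
  rw [hα] at hσ
  have hp : ‖p‖ ^ 2 = ∑ v, α v * ⟪x, v⟫ := by
    have h := (Submodule.span ℝ (S : Set E)).re_inner_starProjection_eq_normSq x
    change ⟪p, x⟫ = ‖p‖ ^ 2 at h
    rw [← h, real_inner_comm, ← hα, inner_sum]
    simp only [real_inner_smul_right]
  have hcs : (‖p‖ ^ 2) ^ 2 ≤ (∑ v, α v ^ 2) * ∑ v ∈ S, ⟪x, v⟫ ^ 2 := by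
    rw [hp, ← Finset.sum_coe_sort S]
    exact Finset.sum_mul_sq_le_sq_mul_sq _ _ _
  have hsum : 0 ≤ ∑ v ∈ S, ⟪x, v⟫ ^ 2 := Finset.sum_nonneg fun v _ => sq_nonneg _
  have hmul : ‖p‖ ^ 2 * (sigmaMin S * ‖p‖ ^ 2) ≤ ‖p‖ ^ 2 * ∑ v ∈ S, ⟪x, v⟫ ^ 2 :=
    calc ‖p‖ ^ 2 * (sigmaMin S * ‖p‖ ^ 2) = sigmaMin S * (‖p‖ ^ 2) ^ 2 := by ring
      _ ≤ sigmaMin S * ((∑ v, α v ^ 2) * ∑ v ∈ S, ⟪x, v⟫ ^ 2) :=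
        mul_le_mul_of_nonneg_left hcs (sigmaMin_nonneg S)
      _ = (sigmaMin S * ∑ v, α v ^ 2) * ∑ v ∈ S, ⟪x, v⟫ ^ 2 := by ring
      _ ≤ ‖p‖ ^ 2 * ∑ v ∈ S, ⟪x, v⟫ ^ 2 := mul_le_mul_of_nonneg_right hσ hsum
  obtain hp0 | hp0 := (sq_nonneg ‖p‖).eq_or_lt
  · rw [← hp0, mul_zero]
    exact hsum
  · exact le_of_mul_le_mul_left hmul hp0

end SigmaMin

section OptimalGain

variable {m : ℕ}

local notation "E" => EuclideanSpace ℝ (Fin m)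

theorem sigmaMin_mul_sq_le_sum_fMat_insert_sub {n : ℕ} (A : Fin n → E) (O T : Finset E)
    (hO : ∀ v ∈ O, ‖v‖ = 1) :
    sigmaMin O * max (fMat A O - fMat A T) 0 ^ 2 ≤
      4 * fMat A O * ∑ v ∈ O, (fMat A (insert v T) - fMat A T) := by
  set PO := (Submodule.span ℝ (O : Set E)).starProjection
  set w := fun j => A j - (Submodule.span ℝ (T : Set E)).starProjection (A j)
  have hgain : ∀ v ∈ O, ∑ j, ⟪w j, v⟫ ^ 2 ≤ fMat A (insert v T) - fMat A T := by
    intro v hv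
    rw [fMat, fMat, ← Finset.sum_sub_distrib]
    refine Finset.sum_le_sum fun j _ => ?_
    simpa [hO v hv] using inner_sq_le_fVec_insert_sub (A j) v T
  have hσ : sigmaMin O * ∑ j, ‖PO (w j)‖ ^ 2 ≤ ∑ j, ∑ v ∈ O, ⟪w j, v⟫ ^ 2 := by
    rw [Finset.mul_sum]
    exact Finset.sum_le_sum fun j _ => sigmaMin_mul_norm_sq_starProjection_le O (w j)
  have hgap : max (fMat A O - fMat A T) 0 ^ 2 ≤ 4 * fMat A O * ∑ j, ‖PO (w j)‖ ^ 2 :=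
    sq_max_sum_sub_le A
  calc sigmaMin O * max (fMat A O - fMat A T) 0 ^ 2
      ≤ sigmaMin O * (4 * fMat A O * ∑ j, ‖PO (w j)‖ ^ 2) :=
        mul_le_mul_of_nonneg_left hgap (sigmaMin_nonneg O)
    _ = 4 * fMat A O * (sigmaMin O * ∑ j, ‖PO (w j)‖ ^ 2) := by ring
    _ ≤ 4 * fMat A O * ∑ v ∈ O, ∑ j, ⟪w j, v⟫ ^ 2 := by
        rw [Finset.sum_comm (s := O)]
        exact mul_le_mul_of_nonneg_left hσ (by linarith [fMat_nonneg A O])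
    _ ≤ 4 * fMat A O * ∑ v ∈ O, (fMat A (insert v T) - fMat A T) :=
        mul_le_mul_of_nonneg_left (Finset.sum_le_sum hgain) (by linarith [fMat_nonneg A O])

end OptimalGain

section MissProbability

theorem choose_pred_mul_le {t n : ℕ} (s : ℕ) (htn : t ≤ n) :
    (t - 1).choose s * n ≤ t.choose s * (n - s) := by
  rcases t with _ | t
  · rcases s with _ | s <;> simp
  refine Nat.le_of_mul_le_mul_right ?_ t.succ_pos
  calc (t + 1 - 1).choose s * n * (t + 1) = (t + 1).choose s * ((t + 1 - s) * n) := by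
        rw [Nat.add_sub_cancel, mul_right_comm, Nat.choose_mul_succ_eq]; ring
    _ ≤ (t + 1).choose s * ((n - s) * (t + 1)) := by
        refine Nat.mul_le_mul_left _ ?_
        rcases le_or_gt s (t + 1) with hst | hst
        · zify [hst, hst.trans htn]
          nlinarith
        · simp [Nat.sub_eq_zero_of_le hst.le]
    _ = (t + 1).choose s * (n - s) * (t + 1) := by ring

theorem choose_sub_mul_pow_le (n s o : ℕ) :
    (n - o).choose s * n ^ o ≤ n.choose s * (n - s) ^ o := by
  induction o with
  | zero => simp
  | succ o ih =>
    calc (n - (o + 1)).choose s * n ^ (o + 1) = (n - o - 1).choose s * n * n ^ o := by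
          rw [Nat.sub_sub]; ring
      _ ≤ (n - o).choose s * (n - s) * n ^ o :=
          Nat.mul_le_mul_right _ (choose_pred_mul_le s (Nat.sub_le n o))
      _ = (n - o).choose s * n ^ o * (n - s) := by ring
      _ ≤ n.choose s * (n - s) ^ o * (n - s) := Nat.mul_le_mul_right _ ih
      _ = n.choose s * (n - s) ^ (o + 1) := by ring

theorem choose_sub_le_choose_mul_one_sub_div_pow {n s : ℕ} (o : ℕ) (hs : s ≤ n) :
    ((n - o).choose s : ℝ) ≤ n.choose s * (1 - s / n) ^ o := by
  rcases n.eq_zero_or_pos with rfl | hn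
  · simp [Nat.le_zero.1 hs]
  have hn' : (0 : ℝ) < n := Nat.cast_pos.2 hn
  have h : ((n - o).choose s : ℝ) * n ^ o ≤ n.choose s * ((n : ℝ) - s) ^ o := by
    exact_mod_cast choose_sub_mul_pow_le n s o
  rw [one_sub_div hn'.ne', div_pow, ← mul_div_assoc, le_div_iff₀ (by positivity)]
  exact h

theorem one_sub_pow_le_one_sub_mul {x t δ : ℝ} {o : ℕ} (hx1 : x ≤ 1)
    (ht0 : 0 ≤ t) (ht1 : t ≤ 1) (hδ : 0 < δ) (h : t * Real.log (1 / δ) ≤ o * x) :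
    (1 - x) ^ o ≤ 1 - t * (1 - δ) :=
  calc (1 - x) ^ o ≤ Real.exp (-x) ^ o :=
        pow_le_pow_left₀ (by linarith) (by linarith [Real.add_one_le_exp (-x)]) o
    _ = Real.exp (-(o * x)) := by rw [← Real.exp_nat_mul]; ring_nf
    _ ≤ Real.exp (Real.log δ * t) := by
        rw [one_div, Real.log_inv] at h
        exact Real.exp_le_exp.2 (by linarith)
    _ = (1 + (δ - 1)) ^ t := by rw [add_sub_cancel, Real.rpow_def_of_pos hδ]
    _ ≤ 1 + t * (δ - 1) := rpow_one_add_le_one_add_mul_self (by linarith) ht0 ht1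
    _ = 1 - t * (1 - δ) := by ring

end MissProbability

section RandomSubset

open Finset

variable {ι : Type*} [DecidableEq ι] {N O : Finset ι}

theorem sum_powersetCard_ite_inv_card_inter_swap (hON : O ⊆ N) (s : ℕ) {x y : ι}
    (hx : x ∈ O) (hy : y ∈ O) :
    ∑ R ∈ N.powersetCard s, (if x ∈ R then (#(R ∩ O) : ℝ)⁻¹ else 0) =
      ∑ R ∈ N.powersetCard s, (if y ∈ R then (#(R ∩ O) : ℝ)⁻¹ else 0) := by
  set σ := Equiv.swap x y
  have hsupp : {a | σ a ≠ a} ⊆ O := fun a ha => by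
    by_contra h
    exact ha (Equiv.swap_apply_of_ne_of_ne (by rintro rfl; exact h hx) (by rintro rfl; exact h hy))
  have hσO : O.map σ.toEmbedding = O := map_perm hsupp
  have hσN : N.map σ.toEmbedding = N := map_perm (hsupp.trans hON)
  refine sum_equiv σ.finsetCongr (fun R => ?_) (fun R _ => ?_)
  · conv_rhs => rw [Equiv.finsetCongr_apply, ← hσN]
    simp only [mem_powersetCard, map_subset_map, card_map]
  · have hmem : y ∈ R.map σ.toEmbedding ↔ x ∈ R := by
      simp [mem_map_equiv, σ, Equiv.symm_swap, Equiv.swap_apply_right]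
    rw [Equiv.finsetCongr_apply, ← hσO, ← map_inter, card_map, hσO]
    simp only [hmem]

theorem sum_powersetCard_sum_inter_div_card (hON : O ⊆ N) (s : ℕ) (g : ι → ℝ) :
    ∑ R ∈ N.powersetCard s, (∑ x ∈ R ∩ O, g x) / #(R ∩ O) =
      #{R ∈ N.powersetCard s | (R ∩ O).Nonempty} * ((∑ x ∈ O, g x) / #O) := by
  set w : ι → ℝ := fun x =>
    ∑ R ∈ N.powersetCard s, (if x ∈ R then (#(R ∩ O) : ℝ)⁻¹ else 0)
  have hweights : ∀ g : ι → ℝ,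
      ∑ R ∈ N.powersetCard s, (∑ x ∈ R ∩ O, g x) / #(R ∩ O) = ∑ x ∈ O, g x * w x := by
    intro g
    have hR : ∀ R : Finset ι, (∑ x ∈ R ∩ O, g x) / #(R ∩ O) =
        ∑ x ∈ O, g x * (if x ∈ R then (#(R ∩ O) : ℝ)⁻¹ else 0) := by
      intro R
      rw [sum_div, inter_comm, ← filter_mem_eq_inter, sum_filter]
      simp only [mul_ite, mul_zero, div_eq_mul_inv]
    simp only [hR, w, mul_sum]
    exact sum_comm
  obtain rfl | ⟨x₀, hx₀⟩ := O.eq_empty_or_nonempty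
  · simp
  have hw : ∀ x ∈ O, w x = w x₀ := fun x hx =>
    sum_powersetCard_ite_inv_card_inter_swap hON s hx hx₀
  have hhit : (#{R ∈ N.powersetCard s | (R ∩ O).Nonempty} : ℝ) = #O * w x₀ := by
    have hindicator : ∀ R : Finset ι,
        (∑ _x ∈ R ∩ O, (1 : ℝ)) / #(R ∩ O) = if (R ∩ O).Nonempty then 1 else 0 := by
      intro R
      obtain he | hne := (R ∩ O).eq_empty_or_nonempty
      · simp [he]
      · rw [if_pos hne, sum_const, nsmul_one]
        exact div_self (Nat.cast_ne_zero.2 hne.card_pos.ne')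
    have h := hweights fun _ => 1
    rw [sum_congr rfl fun R _ => hindicator R, sum_boole] at h
    rw [h, sum_congr rfl fun x hx => by rw [one_mul, hw x hx], sum_const, nsmul_eq_mul]
  rw [hweights, sum_congr rfl fun x hx => by rw [hw x hx], ← sum_mul, hhit]
  have hO : (#O : ℝ) ≠ 0 := Nat.cast_ne_zero.2 (card_ne_zero_of_mem hx₀)
  field_simp

theorem choose_mul_le_card_filter_inter_nonempty (hON : O ⊆ N) {k : ℕ} (hOk : #O ≤ k)
    {δ : ℝ} (hδ : 0 < δ) {s : ℕ} (hs : #N * Real.log (1 / δ) ≤ k * s) :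
    ((#N).choose (min s #N) : ℝ) * (#O / k * (1 - δ)) ≤
      #{R ∈ N.powersetCard (min s #N) | (R ∩ O).Nonempty} := by
  obtain rfl | hO := O.eq_empty_or_nonempty
  · simp
  have ho : (0 : ℝ) < #O := Nat.cast_pos.2 hO.card_pos
  have hk : (0 : ℝ) < k := ho.trans_le (Nat.cast_le.2 hOk)
  have hn : (0 : ℝ) < #N := ho.trans_le (Nat.cast_le.2 (card_le_card hON))
  have ht1 : (#O : ℝ) / k ≤ 1 := (div_le_one hk).2 (Nat.cast_le.2 hOk)
  have hmiss : {R ∈ N.powersetCard (min s #N) | ¬(R ∩ O).Nonempty} =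
      (N \ O).powersetCard (min s #N) := by
    ext R
    simp only [mem_filter, mem_powersetCard, not_nonempty_iff_eq_empty, subset_sdiff,
      ← disjoint_iff_inter_eq_empty]
    tauto
  have hsplit : (#{R ∈ N.powersetCard (min s #N) | (R ∩ O).Nonempty} : ℝ) +
      (#N - #O).choose (min s #N) = (#N).choose (min s #N) := by
    rw [← card_sdiff_of_subset hON, ← card_powersetCard, ← hmiss, ← card_powersetCard]
    exact_mod_cast card_filter_add_card_filter_not _
  have hratio : (1 - (min s #N : ℕ) / (#N : ℝ)) ^ #O ≤ 1 - #O / k * (1 - δ) := by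
    rcases le_or_gt s #N with hsN | hsN
    · rw [min_eq_left hsN]
      refine one_sub_pow_le_one_sub_mul ((div_le_one hn).2 (Nat.cast_le.2 hsN))
        (by positivity) ht1 hδ ?_
      rw [div_mul_eq_mul_div, div_le_iff₀ hk, mul_div_assoc', div_mul_eq_mul_div,
        le_div_iff₀ hn]
      nlinarith
    · rw [min_eq_right hsN.le, div_self hn.ne', sub_self, zero_pow hO.card_pos.ne']
      linarith [mul_nonneg (div_nonneg ho.le hk.le) hδ.le]
  have hchoose := choose_sub_le_choose_mul_one_sub_div_pow #O (min_le_right s #N)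
  nlinarith [mul_le_mul_of_nonneg_left hratio (Nat.cast_nonneg ((#N).choose (min s #N)))]

theorem choose_mul_sum_le_sum_powersetCard (hON : O ⊆ N) {k : ℕ} (hOk : #O ≤ k)
    {δ : ℝ} (hδ : 0 < δ) {s : ℕ} (hs : #N * Real.log (1 / δ) ≤ k * s) {g : ι → ℝ}
    (hg : ∀ x ∈ O, 0 ≤ g x) {F : Finset ι → ℝ}
    (hF : ∀ R ∈ N.powersetCard (min s #N), 0 ≤ F R ∧ ∀ x ∈ R, g x ≤ F R) :
    ((#N).choose (min s #N) : ℝ) * ((1 - δ) / k * ∑ x ∈ O, g x) ≤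
      ∑ R ∈ N.powersetCard (min s #N), F R := by
  obtain rfl | hO := O.eq_empty_or_nonempty
  · simpa using sum_nonneg fun R hR => (hF R hR).1
  have ho : (#O : ℝ) ≠ 0 := Nat.cast_ne_zero.2 hO.card_pos.ne'
  have havg : ∀ R ∈ N.powersetCard (min s #N), (∑ x ∈ R ∩ O, g x) / #(R ∩ O) ≤ F R := by
    intro R hR
    refine div_le_of_le_mul₀ (Nat.cast_nonneg _) (hF R hR).1 ?_
    rw [mul_comm, ← nsmul_eq_mul]
    exact sum_le_card_nsmul _ _ _ fun x hx => (hF R hR).2 x (mem_inter.1 hx).1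
  calc ((#N).choose (min s #N) : ℝ) * ((1 - δ) / k * ∑ x ∈ O, g x)
      = (#N).choose (min s #N) * (#O / k * (1 - δ)) * ((∑ x ∈ O, g x) / #O) := by
        field_simp
    _ ≤ #{R ∈ N.powersetCard (min s #N) | (R ∩ O).Nonempty} * ((∑ x ∈ O, g x) / #O) :=
        mul_le_mul_of_nonneg_right (choose_mul_le_card_filter_inter_nonempty hON hOk hδ hs)
          (div_nonneg (sum_nonneg hg) (Nat.cast_nonneg _))
    _ = ∑ R ∈ N.powersetCard (min s #N), (∑ x ∈ R ∩ O, g x) / #(R ∩ O) :=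
        (sum_powersetCard_sum_inter_div_card hON _ g).symm
    _ ≤ ∑ R ∈ N.powersetCard (min s #N), F R := sum_le_sum havg

end RandomSubset

section GapDecay

/-- `y / (1 + a y)` bounds the solution of `ψ' ≤ ψ - c ψ²` after `a / c` steps; it is continued
by the identity on `y ≤ 0` so that it stays monotone and concave on all of `ℝ`. -/
noncomputable def gapDecay (a y : ℝ) : ℝ := if y ≤ 0 then y else y / (1 + a * y)

variable {a : ℝ}

theorem gapDecay_zero_left (y : ℝ) : gapDecay 0 y = y := by
  unfold gapDecay
  split_ifs <;> simp

theorem gapDecay_mono (ha : 0 ≤ a) {y z : ℝ} (hyz : y ≤ z) : gapDecay a y ≤ gapDecay a z := by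
  unfold gapDecay
  split_ifs with hy hz hz
  · exact hyz
  · exact hy.trans (div_pos (not_le.1 hz) (by nlinarith [not_le.1 hz])).le
  · linarith
  · rw [div_le_div_iff₀ (by nlinarith) (by nlinarith)]
    nlinarith

theorem gapDecay_le_tangent (ha : 0 ≤ a) (q y : ℝ) :
    gapDecay a y ≤ gapDecay a q + (y - q) / (1 + a * max q 0) ^ 2 := by
  unfold gapDecay
  rcases le_or_gt q 0 with hq | hq
  · rw [if_pos hq, max_eq_right hq, mul_zero, add_zero, one_pow, div_one, add_sub_cancel]
    split_ifs with hy
    · exact le_rfl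
    · exact div_le_self (not_le.1 hy).le (by nlinarith [not_le.1 hy])
  · have hd : 0 < 1 + a * q := by nlinarith
    rw [if_neg hq.not_ge, max_eq_left hq.le, div_add_div _ _ hd.ne' (by positivity)]
    split_ifs with hy
    · rw [le_div_iff₀ (by positivity)]
      have haq : 0 ≤ a * q := mul_nonneg ha hq.le
      nlinarith [mul_nonneg haq hq.le, mul_nonneg haq (neg_nonneg.2 hy),
        mul_nonneg (mul_nonneg haq haq) (neg_nonneg.2 hy)]
    · rw [div_le_div_iff₀ (by nlinarith [not_le.1 hy]) (by positivity)]
      nlinarith [mul_nonneg ha (sq_nonneg (y - q)), mul_nonneg ha hq.le]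

theorem sum_gapDecay_le {α : Type*} (ha : 0 ≤ a) {P : Finset α} (hP : P.Nonempty) (y : α → ℝ) :
    ∑ i ∈ P, gapDecay a (y i) ≤ P.card * gapDecay a ((∑ i ∈ P, y i) / P.card) := by
  set q := (∑ i ∈ P, y i) / P.card
  have hP' : (P.card : ℝ) ≠ 0 := Nat.cast_ne_zero.2 hP.card_pos.ne'
  calc ∑ i ∈ P, gapDecay a (y i)
      ≤ ∑ i ∈ P, (gapDecay a q + (y i - q) / (1 + a * max q 0) ^ 2) :=
        Finset.sum_le_sum fun i _ => gapDecay_le_tangent ha q (y i)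
    _ = P.card * gapDecay a q + (∑ i ∈ P, y i - P.card * q) / (1 + a * max q 0) ^ 2 := by
        rw [Finset.sum_add_distrib, Finset.sum_const, nsmul_eq_mul, ← Finset.sum_div,
          Finset.sum_sub_distrib, Finset.sum_const, nsmul_eq_mul]
    _ = P.card * gapDecay a q := by
        rw [mul_div_cancel₀ _ hP', sub_self, zero_div, add_zero]

theorem gapDecay_sub_mul_sq_le {c : ℝ} (ha : 0 ≤ a) (hc : 0 ≤ c) (ψ : ℝ) :
    gapDecay a (ψ - c * max ψ 0 ^ 2) ≤ gapDecay (a + c) ψ := by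
  rcases le_or_gt ψ 0 with hψ | hψ
  · simp [gapDecay, hψ]
  rw [max_eq_left hψ.le]
  unfold gapDecay
  rw [if_neg hψ.not_ge]
  split_ifs with hy
  · exact hy.trans (div_pos hψ (by nlinarith)).le
  · rw [div_le_div_iff₀ (by nlinarith [not_le.1 hy]) (by nlinarith)]
    nlinarith [mul_nonneg (sq_nonneg c) (pow_pos hψ 3).le]

theorem gapDecay_le_mul {y ε δ : ℝ} (ha : 0 ≤ a) (hy : 0 < y) (hε : 0 < ε) (hδ : 0 ≤ δ)
    (hεδ : ε + δ ≤ 1) (h : 4 * (1 - δ) ≤ ε * (a * y)) : gapDecay a y ≤ (ε + δ) * y := by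
  unfold gapDecay
  rw [if_neg hy.not_ge, div_le_iff₀ (by nlinarith)]
  have hone : 1 ≤ (ε + δ) * (1 + a * y) := by
    refine le_of_mul_le_mul_left ?_ hε
    nlinarith [mul_le_mul_of_nonneg_left h (by linarith : 0 ≤ ε + δ)]
  nlinarith

end GapDecay

section LazyGreedy

open Finset

variable {m nA nB : ℕ} (A : Fin nA → EuclideanSpace ℝ (Fin m))
  (B : Fin nB → EuclideanSpace ℝ (Fin m)) (pick : Finset (Fin nB) → Finset (Fin nB) → Fin nB)

def lazySamples (s : ℕ) (T : Finset (Fin nB)) : Finset (Finset (Fin nB)) :=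
  (univ \ T).powersetCard (min s #(univ \ T))

def lazyStep (T R : Finset (Fin nB)) : Finset (Fin nB) :=
  if R.Nonempty then insert (pick T R) T else T

theorem lazyExp_succ (s r : ℕ) (T : Finset (Fin nB)) :
    lazyExp A B pick s (r + 1) T =
      (∑ R ∈ lazySamples s T, lazyExp A B pick s r (lazyStep pick T R)) /
        #(lazySamples s T) := rfl

theorem lazySamples_nonempty (s : ℕ) (T : Finset (Fin nB)) : (lazySamples s T).Nonempty :=
  powersetCard_nonempty.2 (min_le_right _ _)

theorem fMat_le_fMat_lazyStep (T R : Finset (Fin nB)) :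
    fMat A (T.image B) ≤ fMat A ((lazyStep pick T R).image B) := by
  unfold lazyStep
  split_ifs
  · rw [image_insert]
    exact fMat_mono A (subset_insert _ _)
  · exact le_rfl

theorem fMat_insert_le_fMat_lazyStep
    (hpick : ∀ T R : Finset (Fin nB), R.Nonempty →
      pick T R ∈ R ∧ ∀ j ∈ R,
        fMat A (insert (B j) (T.image B)) ≤ fMat A (insert (B (pick T R)) (T.image B)))
    {T R : Finset (Fin nB)} {j : Fin nB} (hj : j ∈ R) :
    fMat A (insert (B j) (T.image B)) ≤ fMat A ((lazyStep pick T R).image B) := by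
  rw [lazyStep, if_pos ⟨j, hj⟩, image_insert]
  exact (hpick T R ⟨j, hj⟩).2 j hj

theorem mul_sum_le_avg_lazyStep_sub {k : ℕ} (OPT : Finset (EuclideanSpace ℝ (Fin m)))
    (hOPTsub : OPT ⊆ univ.image B) (hOPTcard : #OPT = k) {δ : ℝ} (hδ0 : 0 < δ) (hδ1 : δ ≤ 1)
    (hpick : ∀ T R : Finset (Fin nB), R.Nonempty →
      pick T R ∈ R ∧ ∀ j ∈ R,
        fMat A (insert (B j) (T.image B)) ≤ fMat A (insert (B (pick T R)) (T.image B)))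
    {s : ℕ} (hs : nB * Real.log (1 / δ) ≤ k * s) (T : Finset (Fin nB)) :
    (1 - δ) / k * ∑ v ∈ OPT, (fMat A (insert v (T.image B)) - fMat A (T.image B)) ≤
      (∑ R ∈ lazySamples s T, fMat A ((lazyStep pick T R).image B)) / #(lazySamples s T) -
        fMat A (T.image B) := by
  set Tb := T.image B
  set g : Fin nB → ℝ := fun j => fMat A (insert (B j) Tb) - fMat A Tb
  obtain ⟨I, -, hinj, hI⟩ := exists_subset_injOn_image_eq_of_surjOn Set.univ OPT
    fun v hv => by simpa using hOPTsub hv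
  have hsumI : ∑ j ∈ I \ T, g j = ∑ v ∈ OPT, (fMat A (insert v Tb) - fMat A Tb) := by
    rw [sum_subset sdiff_subset fun j _ hj => ?_, ← hI, sum_image hinj]
    have hjT : B j ∈ Tb := mem_image_of_mem B (by simp_all)
    simp [g, insert_eq_of_mem hjT]
  have hIk : #(I \ T) ≤ k := by
    rw [← hOPTcard, ← hI, card_image_of_injOn hinj]
    exact card_le_card sdiff_subset
  have hNk : #(univ \ T) * Real.log (1 / δ) ≤ k * s := by
    refine le_trans (mul_le_mul_of_nonneg_right ?_ (Real.log_nonneg ?_)) hs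
    · exact_mod_cast (card_le_univ _).trans (Fintype.card_fin nB).le
    · rw [le_div_iff₀ hδ0]
      linarith
  have hsample := choose_mul_sum_le_sum_powersetCard (sdiff_subset_sdiff (subset_univ I) le_rfl)
    hIk hδ0 hNk (fun j _ => sub_nonneg.2 (fMat_mono A (subset_insert _ _)))
    (F := fun R => fMat A ((lazyStep pick T R).image B) - fMat A Tb) fun R _ =>
      ⟨sub_nonneg.2 (fMat_le_fMat_lazyStep A B pick T R),
        fun x hx => sub_le_sub_right (fMat_insert_le_fMat_lazyStep A B pick hpick hx) _⟩
  rw [hsumI, sum_sub_distrib (s := (univ \ T).powersetCard _), sum_const, card_powersetCard,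
    nsmul_eq_mul] at hsample
  have hP : (0 : ℝ) < #(lazySamples s T) := Nat.cast_pos.2 (lazySamples_nonempty s T).card_pos
  have hcard : (#(lazySamples s T) : ℝ) = (#(univ \ T)).choose (min s #(univ \ T)) := by
    rw [lazySamples, card_powersetCard]
  rw [le_sub_iff_add_le, le_div_iff₀ hP, hcard]
  change _ ≤ ∑ R ∈ (univ \ T).powersetCard (min s #(univ \ T)), _
  linarith

theorem fMat_add_mul_sq_le_avg_lazyStep (hB : ∀ j, ‖B j‖ = 1) {k : ℕ}
    (OPT : Finset (EuclideanSpace ℝ (Fin m))) (hOPTsub : OPT ⊆ univ.image B)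
    (hOPTcard : #OPT = k) {δ : ℝ} (hδ0 : 0 < δ) (hδ1 : δ ≤ 1)
    (hpick : ∀ T R : Finset (Fin nB), R.Nonempty →
      pick T R ∈ R ∧ ∀ j ∈ R,
        fMat A (insert (B j) (T.image B)) ≤ fMat A (insert (B (pick T R)) (T.image B)))
    {s : ℕ} (hs : nB * Real.log (1 / δ) ≤ k * s) (T : Finset (Fin nB)) :
    fMat A (T.image B) + (1 - δ) / k * (sigmaMin OPT / (4 * fMat A OPT)) *
        max (fMat A OPT - fMat A (T.image B)) 0 ^ 2 ≤
      (∑ R ∈ lazySamples s T, fMat A ((lazyStep pick T R).image B)) / #(lazySamples s T) := by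
  have hOPT1 : ∀ v ∈ OPT, ‖v‖ = 1 := fun v hv => by
    obtain ⟨j, -, rfl⟩ := mem_image.1 (hOPTsub hv)
    exact hB j
  have hgain := sigmaMin_mul_sq_le_sum_fMat_insert_sub A OPT (T.image B) hOPT1
  have hsample := mul_sum_le_avg_lazyStep_sub A B pick OPT hOPTsub hOPTcard hδ0 hδ1 hpick hs T
  have hsum : sigmaMin OPT / (4 * fMat A OPT) * max (fMat A OPT - fMat A (T.image B)) 0 ^ 2 ≤
      ∑ v ∈ OPT, (fMat A (insert v (T.image B)) - fMat A (T.image B)) := by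
    rw [div_mul_eq_mul_div]
    refine div_le_of_le_mul₀ (by linarith [fMat_nonneg A OPT]) ?_ (by linarith)
    exact sum_nonneg fun v _ => sub_nonneg.2 (fMat_mono A (subset_insert _ _))
  have hδk : 0 ≤ (1 - δ) / k := div_nonneg (by linarith) k.cast_nonneg
  nlinarith [mul_le_mul_of_nonneg_left hsum hδk]

theorem sub_gapDecay_le_lazyExp {s : ℕ} {fstar c : ℝ} (hc : 0 ≤ c)
    (hstep : ∀ T : Finset (Fin nB),
      fMat A (T.image B) + c * max (fstar - fMat A (T.image B)) 0 ^ 2 ≤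
      (∑ R ∈ lazySamples s T, fMat A ((lazyStep pick T R).image B)) / #(lazySamples s T))
    (r : ℕ) (T : Finset (Fin nB)) :
    fstar - gapDecay (c * r) (fstar - fMat A (T.image B)) ≤ lazyExp A B pick s r T := by
  induction r generalizing T with
  | zero => simp [gapDecay_zero_left, lazyExp]
  | succ r ih =>
    set P := lazySamples s T
    set ψ := fstar - fMat A (T.image B)
    set ψR := fun R => fstar - fMat A ((lazyStep pick T R).image B)
    have hP : (0 : ℝ) < #P := Nat.cast_pos.2 (lazySamples_nonempty s T).card_pos
    have hcr : 0 ≤ c * r := mul_nonneg hc r.cast_nonneg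
    have havg : (∑ R ∈ P, ψR R) / #P ≤ ψ - c * max ψ 0 ^ 2 := by
      rw [sum_sub_distrib, sum_const, nsmul_eq_mul, sub_div, mul_div_cancel_left₀ _ hP.ne']
      linarith [hstep T]
    calc fstar - gapDecay (c * ↑(r + 1)) ψ
        ≤ fstar - gapDecay (c * r) ((∑ R ∈ P, ψR R) / #P) := by
          rw [Nat.cast_succ, mul_add_one]
          linarith [gapDecay_sub_mul_sq_le hcr hc ψ, gapDecay_mono hcr havg]
      _ = fstar - #P * gapDecay (c * r) ((∑ R ∈ P, ψR R) / #P) / #P := by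
          rw [mul_div_cancel_left₀ _ hP.ne']
      _ ≤ fstar - (∑ R ∈ P, gapDecay (c * r) (ψR R)) / #P := by
          gcongr
          exact sum_gapDecay_le hcr (lazySamples_nonempty s T) ψR
      _ = (∑ R ∈ P, (fstar - gapDecay (c * r) (ψR R))) / #P := by
          rw [sum_sub_distrib, sum_const, nsmul_eq_mul, sub_div, mul_div_cancel_left₀ _ hP.ne']
      _ ≤ lazyExp A B pick s (r + 1) T := by
          rw [lazyExp_succ]
          exact div_le_div_of_nonneg_right (sum_le_sum fun R _ => ih _) hP.le

end LazyGreedy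

theorem lazier_than_lazy_greedy_general {m nA nB : ℕ}
    (A : Fin nA → EuclideanSpace ℝ (Fin m)) (B : Fin nB → EuclideanSpace ℝ (Fin m))
    (hB : ∀ j, ‖B j‖ = 1) (k : ℕ) (hk : 1 ≤ k)
    (OPT : Finset (EuclideanSpace ℝ (Fin m)))
    (hOPTsub : OPT ⊆ Finset.image B Finset.univ) (hOPTcard : OPT.card = k)
    (hσ : 0 < sigmaMin OPT)
    (ε δ : ℝ) (hε : 0 < ε) (hδ0 : 0 < δ) (hδ1 : δ < 1) (hεδ : ε + δ ≤ 1)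
    (pick : Finset (Fin nB) → Finset (Fin nB) → Fin nB)
    (hpick : ∀ T R : Finset (Fin nB), R.Nonempty →
      pick T R ∈ R ∧ ∀ j ∈ R,
        fMat A (insert (B j) (T.image B)) ≤ fMat A (insert (B (pick T R)) (T.image B)))
    (r : ℕ) (hr : (16 * k : ℝ) / (ε * sigmaMin OPT) ≤ r) :
    (1 - ε - δ) * fMat A OPT ≤
      lazyExp A B pick ⌈(nB : ℝ) * Real.log (1 / δ) / k⌉₊ r ∅ := by
  have hk' : (0 : ℝ) < k := Nat.cast_pos.2 hk
  have hs : nB * Real.log (1 / δ) ≤ k * ⌈(nB : ℝ) * Real.log (1 / δ) / k⌉₊ :=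
    (div_le_iff₀' hk').1 (Nat.le_ceil _)
  set c := (1 - δ) / k * (sigmaMin OPT / (4 * fMat A OPT))
  have hc : 0 ≤ c := mul_nonneg (div_nonneg (by linarith) hk'.le)
    (div_nonneg hσ.le (by linarith [fMat_nonneg A OPT]))
  have hdescent := sub_gapDecay_le_lazyExp A B pick hc
    (fMat_add_mul_sq_le_avg_lazyStep A B pick hB OPT hOPTsub hOPTcard hδ0 hδ1.le hpick hs) r ∅
  rw [Finset.image_empty, fMat_empty, sub_zero] at hdescent
  refine le_trans ?_ hdescent
  obtain hzero | hpos := (fMat_nonneg A OPT).eq_or_lt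
  · simp [← hzero, gapDecay]
  have h16 : 16 * k ≤ ε * sigmaMin OPT * r := (div_le_iff₀' (mul_pos hε hσ)).1 hr
  have hX : 4 * (1 - δ) ≤ ε * (c * r * fMat A OPT) := by
    have hcr : ε * (c * r * fMat A OPT) = (1 - δ) * (ε * sigmaMin OPT * r) / (4 * k) := by
      simp only [c]
      field_simp
    rw [hcr, le_div_iff₀ (by positivity)]
    nlinarith
  linarith [gapDecay_le_mul (mul_nonneg hc r.cast_nonneg) hpos hε hδ0.le hεδ hX]

/-- Lazier-than-lazy greedy achieves a (1 − ε − δ) approximation in expectation. -/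
theorem lazier_than_lazy_greedy {m nA nB : ℕ}
    (A : Fin nA → EuclideanSpace ℝ (Fin m)) (B : Fin nB → EuclideanSpace ℝ (Fin m))
    (hB : ∀ j, ‖B j‖ = 1) (k : ℕ) (hk : 1 ≤ k)
    (OPT : Finset (EuclideanSpace ℝ (Fin m)))
    (hOPTsub : OPT ⊆ Finset.image B Finset.univ) (hOPTcard : OPT.card = k)
    (hOPTopt : ∀ C : Finset (EuclideanSpace ℝ (Fin m)),
      C ⊆ Finset.image B Finset.univ → C.card = k → fMat A C ≤ fMat A OPT)
    (hσ : 0 < sigmaMin OPT)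
    (ε δ : ℝ) (hε : 0 < ε) (hδ0 : 0 < δ) (hδ1 : δ < 1) (hεδ : ε + δ ≤ 1)
    (pick : Finset (Fin nB) → Finset (Fin nB) → Fin nB)
    (hpick : ∀ T R : Finset (Fin nB), R.Nonempty →
      pick T R ∈ R ∧ ∀ j ∈ R,
        fMat A (insert (B j) (T.image B)) ≤ fMat A (insert (B (pick T R)) (T.image B)))
    (r : ℕ) (hr : (16 * k : ℝ) / (ε * sigmaMin OPT) ≤ r) :
    (1 - ε - δ) * fMat A OPT ≤
      lazyExp A B pick ⌈(nB : ℝ) * Real.log (1 / δ) / k⌉₊ r ∅ :=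
  lazier_than_lazy_greedy_general A B hB k hk OPT hOPTsub hOPTcard hσ ε δ hε hδ0 hδ1 hεδ pick hpick
    r hr
end

section
/- Let A ∈ ℝ^{m×n}, and let C and V be finite sets of vectors in ℝ^m with f_A(V) ≥ f_A(C). Let A′ be the matrix whose j-th column is A_j − Π_C A_j (each column of A with its orthogonal projection onto span(C) removed). Then f_{A′}(V) ≥ ( √(f_A(V)) − √(f_A(C)) )². -/
open scoped RealInnerProductSpace

attribute [local instance] Classical.decEq

/-!
Column by column, `Π_V a = Π_V (a - Π_C a) + Π_V (Π_C a)` and `Π_V` is a contraction, so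
`‖Π_V a‖ ≤ ‖Π_V (a - Π_C a)‖ + ‖Π_C a‖`. Minkowski's inequality in `ℓ²` over the columns turns this
into `√f_A(V) ≤ √f_{A'}(V) + √f_A(C)`, and squaring the nonnegative `√f_A(V) - √f_A(C)` concludes.
-/

theorem Submodule.norm_orthogonalProjectionOnto_le_add {E : Type*} [NormedAddCommGroup E]
    [InnerProductSpace ℝ E] (K L : Submodule ℝ E) [K.HasOrthogonalProjection]
    [L.HasOrthogonalProjection] (a : E) :
    ‖L.orthogonalProjectionOnto a‖ ≤
      ‖L.orthogonalProjectionOnto (a - K.orthogonalProjectionOnto a)‖ +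
        ‖K.orthogonalProjectionOnto a‖ := by
  have hsplit : L.orthogonalProjectionOnto a =
      L.orthogonalProjectionOnto (a - K.orthogonalProjectionOnto a) +
        L.orthogonalProjectionOnto (K.orthogonalProjectionOnto a : E) := by
    rw [← map_add, sub_add_cancel]
  calc ‖L.orthogonalProjectionOnto a‖
      ≤ ‖L.orthogonalProjectionOnto (a - K.orthogonalProjectionOnto a)‖ +
          ‖L.orthogonalProjectionOnto (K.orthogonalProjectionOnto a : E)‖ :=
        hsplit ▸ norm_add_le _ _
    _ ≤ _ := by gcongr; exact L.norm_orthogonalProjectionOnto_apply_le _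

theorem Real.sqrt_sum_sq_le_add_of_le_add {ι : Type*} [Fintype ι] {a b c : ι → ℝ}
    (ha : ∀ i, 0 ≤ a i) (h : ∀ i, a i ≤ b i + c i) :
    √(∑ i, a i ^ 2) ≤ √(∑ i, b i ^ 2) + √(∑ i, c i ^ 2) := by
  have hmono : √(∑ i, a i ^ 2) ≤ √(∑ i, (b i + c i) ^ 2) :=
    Real.sqrt_le_sqrt <| Finset.sum_le_sum fun i _ => pow_le_pow_left₀ (ha i) (h i) 2
  have hminkowski := norm_add_le (WithLp.toLp 2 b : EuclideanSpace ℝ ι) (WithLp.toLp 2 c)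
  simp only [EuclideanSpace.norm_eq, Real.norm_eq_abs, sq_abs, ← WithLp.toLp_add,
    Pi.add_apply] at hminkowski
  exact hmono.trans hminkowski

theorem Real.sq_sqrt_sub_sqrt_le {a c r : ℝ} (hca : c ≤ a) (hr : 0 ≤ r)
    (h : √a ≤ √r + √c) : (√a - √c) ^ 2 ≤ r := by
  calc (√a - √c) ^ 2 ≤ √r ^ 2 :=
        pow_le_pow_left₀ (sub_nonneg.mpr (Real.sqrt_le_sqrt hca)) (by linarith) 2
    _ = r := Real.sq_sqrt hr

/-- After subtracting from each column of A its projection onto span(C), the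
set V still covers at least (√f_A(V) − √f_A(C))² of the residual matrix. -/
theorem residual_coverage {m n : ℕ}
    (A : Fin n → EuclideanSpace ℝ (Fin m))
    (C V : Finset (EuclideanSpace ℝ (Fin m)))
    (hVC : fMat A C ≤ fMat A V) :
    (Real.sqrt (fMat A V) - Real.sqrt (fMat A C)) ^ 2 ≤
      fMat (fun j => A j -
        (Submodule.orthogonalProjectionOnto
          (Submodule.span ℝ (C : Set (EuclideanSpace ℝ (Fin m)))) (A j) :
          EuclideanSpace ℝ (Fin m))) V := by
  refine Real.sq_sqrt_sub_sqrt_le hVC (Finset.sum_nonneg fun _ _ => sq_nonneg _) ?_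
  exact Real.sqrt_sum_sq_le_add_of_le_add (fun _ => norm_nonneg _)
    (fun j => Submodule.norm_orthogonalProjectionOnto_le_add _ _ (A j))
end

section
/- Let e_0, e_1, …, e_t be an orthonormal family in ℝ^m, let θ > 0, and for j = 1, …, t set v_j := 2θ·e_0 + e_j. Then the maximum of ⟨e_0, x⟩² over all unit vectors x ∈ span{v_1, …, v_t} equals 4θ²t/(1 + 4θ²t), attained at the normalization of (1/t)·(v_1 + ⋯ + v_t). -/
open scoped RealInnerProductSpace

lemma aux_repr {M t : ℕ} (e : Fin (t + 1) → EuclideanSpace ℝ (Fin M))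
    (θ : ℝ) (v : Fin t → EuclideanSpace ℝ (Fin M))
    (hv : ∀ j : Fin t, v j = (2 * θ) • e 0 + e j.succ) (c : Fin t → ℝ) :
    ∑ j, c j • v j =
      ∑ i : Fin (t + 1), (Fin.cons (2 * θ * ∑ j, c j) c : Fin (t+1) → ℝ) i • e i := by
  rw [Fin.sum_univ_succ]
  simp only [Fin.cons_zero, Fin.cons_succ, hv, smul_add]
  rw [Finset.sum_add_distrib, ← Finset.sum_smul]
  congr 1
  rw [smul_smul, mul_comm]

lemma aux_inner {M t : ℕ} (e : Fin (t + 1) → EuclideanSpace ℝ (Fin M))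
    (he : Orthonormal ℝ e) (θ : ℝ) (v : Fin t → EuclideanSpace ℝ (Fin M))
    (hv : ∀ j : Fin t, v j = (2 * θ) • e 0 + e j.succ) (c : Fin t → ℝ) :
    ⟪e 0, ∑ j, c j • v j⟫ = 2 * θ * ∑ j, c j := by
  rw [aux_repr e θ v hv c, he.inner_right_fintype, Fin.cons_zero]

lemma aux_norm {M t : ℕ} (e : Fin (t + 1) → EuclideanSpace ℝ (Fin M))
    (he : Orthonormal ℝ e) (θ : ℝ) (v : Fin t → EuclideanSpace ℝ (Fin M))
    (hv : ∀ j : Fin t, v j = (2 * θ) • e 0 + e j.succ) (c : Fin t → ℝ) :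
    ‖∑ j, c j • v j‖ ^ 2 = (2 * θ * ∑ j, c j) ^ 2 + ∑ j, c j ^ 2 := by
  rw [← real_inner_self_eq_norm_sq, aux_repr e θ v hv c,
    he.inner_sum, Fin.sum_univ_succ]
  simp [sq]


/-- For v_j = 2θ·e_0 + e_j (j = 1, …, t) with (e_0, …, e_t) orthonormal, the
maximum of ⟨e_0, x⟩² over unit vectors x in span{v_1, …, v_t} equals
4θ²t/(1 + 4θ²t), attained at the normalization of (1/t)(v_1 + ⋯ + v_t). -/
theorem tight_example_max {M t : ℕ} (ht : 1 ≤ t)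
    (e : Fin (t + 1) → EuclideanSpace ℝ (Fin M)) (he : Orthonormal ℝ e)
    (θ : ℝ) (hθ : 0 < θ)
    (v : Fin t → EuclideanSpace ℝ (Fin M))
    (hv : ∀ j : Fin t, v j = (2 * θ) • e 0 + e j.succ) :
    (∀ x : EuclideanSpace ℝ (Fin M),
        x ∈ Submodule.span ℝ (Set.range v) → ‖x‖ = 1 →
        ⟪e 0, x⟫ ^ 2 ≤ 4 * θ ^ 2 * t / (1 + 4 * θ ^ 2 * t)) ∧
    (‖(t : ℝ)⁻¹ • ∑ j, v j‖⁻¹ • ((t : ℝ)⁻¹ • ∑ j, v j) ∈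
        Submodule.span ℝ (Set.range v) ∧
      ‖(‖(t : ℝ)⁻¹ • ∑ j, v j‖⁻¹ • ((t : ℝ)⁻¹ • ∑ j, v j))‖ = 1 ∧
      ⟪e 0, ‖(t : ℝ)⁻¹ • ∑ j, v j‖⁻¹ • ((t : ℝ)⁻¹ • ∑ j, v j)⟫ ^ 2 =
        4 * θ ^ 2 * t / (1 + 4 * θ ^ 2 * t)) := by
  have ht' : (0 : ℝ) < t := by exact_mod_cast ht
  have hden : (0 : ℝ) < 1 + 4 * θ ^ 2 * t := by positivity
  constructor
  · intro x hx hnx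
    obtain ⟨c, rfl⟩ := (Submodule.mem_span_range_iff_exists_fun ℝ).mp hx
    rw [aux_inner e he θ v hv c]
    have h1 : (2 * θ * ∑ j, c j) ^ 2 + ∑ j, c j ^ 2 = 1 := by
      rw [← aux_norm e he θ v hv c, hnx]; norm_num
    have h2 : (∑ j, c j) ^ 2 ≤ t * ∑ j, c j ^ 2 := by
      simpa using sq_sum_le_card_mul_sum_sq (s := Finset.univ) (f := c)
    rw [le_div_iff₀ hden]
    nlinarith [mul_le_mul_of_nonneg_left h2 (by positivity : (0:ℝ) ≤ 4 * θ ^ 2),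
      sq_nonneg θ, sq_nonneg (∑ j, c j)]
  · set w := (t : ℝ)⁻¹ • ∑ j, v j with hw
    have hwsum : w = ∑ j, (fun _ : Fin t => (t : ℝ)⁻¹) j • v j := by
      rw [hw, Finset.smul_sum]
    have hS : ∑ _j : Fin t, (t : ℝ)⁻¹ = 1 := by
      simp [Finset.sum_const, mul_comm]
      field_simp
    have hnw2 : ‖w‖ ^ 2 = 4 * θ ^ 2 + (t : ℝ)⁻¹ := by
      rw [hwsum, aux_norm e he θ v hv, hS]
      simp [Finset.sum_const]
      field_simp
      ring
    have hiw : ⟪e 0, w⟫ = 2 * θ := by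
      rw [hwsum, aux_inner e he θ v hv, hS, mul_one]
    have hwne : w ≠ 0 := by
      intro h
      rw [h, norm_zero] at hnw2
      have : (0:ℝ) < (t:ℝ)⁻¹ := by positivity
      nlinarith
    refine ⟨?_, ?_, ?_⟩
    · exact Submodule.smul_mem _ _ (Submodule.smul_mem _ _
        (Submodule.sum_mem _ fun j _ => Submodule.subset_span ⟨j, rfl⟩))
    · exact norm_smul_inv_norm hwne
    · rw [real_inner_smul_right, hiw]
      have hnorm : ‖w‖ ≠ 0 := norm_ne_zero_iff.mpr hwne
      rw [mul_pow, inv_pow, hnw2]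
      have h4 : (4 * θ ^ 2 + (t:ℝ)⁻¹) ≠ 0 := by positivity
      field_simp
      ring
end

section
/- Let e_0, e_1, …, e_t be an orthonormal family in ℝ^m, let θ > 0, and for j = 1, …, t set v_j := 2θ·e_0 + e_j. Let 0 < ε ≤ 1/2. If there exists a unit vector x ∈ span{v_1, …, v_t} with ⟨e_0, x⟩² ≥ 1 − ε, then t ≥ (1 − ε)/(4θ²ε); in particular t ≥ 1/(8θ²ε). Hence any procedure that covers e_0 to within squared-length error ε using only vectors from {v_1, v_2, …} must use Ω(1/(θ²ε)) of them. -/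
open scoped RealInnerProductSpace

/-- Lower bound on the number of vectors v_j = 2θ·e_0 + e_j needed to cover e_0
to within squared-length error ε: if some unit vector in their span has squared
inner product at least 1 − ε with e_0, then t ≥ (1 − ε)/(4θ²ε) ≥ 1/(8θ²ε). -/
theorem tight_example_lower_bound {M t : ℕ}
    (e : Fin (t + 1) → EuclideanSpace ℝ (Fin M)) (he : Orthonormal ℝ e)
    (θ ε : ℝ) (hθ : 0 < θ) (hε0 : 0 < ε) (hε : ε ≤ 1 / 2)
    (v : Fin t → EuclideanSpace ℝ (Fin M))
    (hv : ∀ j : Fin t, v j = (2 * θ) • e 0 + e j.succ)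
    (x : EuclideanSpace ℝ (Fin M))
    (hx : x ∈ Submodule.span ℝ (Set.range v)) (hxnorm : ‖x‖ = 1)
    (hcov : 1 - ε ≤ ⟪e 0, x⟫ ^ 2) :
    (1 - ε) / (4 * θ ^ 2 * ε) ≤ (t : ℝ) ∧ 1 / (8 * θ ^ 2 * ε) ≤ (t : ℝ) := by
  obtain ⟨c, hc⟩ := (Submodule.mem_span_range_iff_exists_fun ℝ).mp hx
  set S : ℝ := ∑ j, c j with hS
  set d : Fin (t + 1) → ℝ := Fin.cases (2 * θ * S) c with hd
  have hxd : x = ∑ i, d i • e i := by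
    rw [← hc, Fin.sum_univ_succ]
    simp only [hd, Fin.cases_zero, Fin.cases_succ]
    have hstep : ∀ j : Fin t, c j • v j = c j • (2 * θ) • e 0 + c j • e j.succ := by
      intro j; rw [hv j, smul_add]
    rw [Finset.sum_congr rfl fun j _ => hstep j, Finset.sum_add_distrib]
    congr 1
    rw [Finset.sum_congr rfl fun j _ => smul_smul (c j) (2 * θ) (e 0),
      ← Finset.sum_smul]
    congr 1
    rw [hS, Finset.mul_sum]
    exact Finset.sum_congr rfl fun j _ => mul_comm _ _
  have hinner : ⟪e 0, x⟫ = 2 * θ * S := by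
    rw [hxd, he.inner_right_fintype d 0]
    simp [hd]
  have hnorm : (2 * θ * S) ^ 2 + ∑ j, c j ^ 2 = 1 := by
    have h1 : ⟪x, x⟫ = ∑ i, d i * d i := by
      rw [hxd, he.inner_sum d d]; simp
    have h2 : ⟪x, x⟫ = 1 := by
      rw [real_inner_self_eq_norm_sq, hxnorm]; norm_num
    rw [h2, Fin.sum_univ_succ] at h1
    simp only [hd, Fin.cases_zero, Fin.cases_succ] at h1
    have h3 : ∑ j, c j * c j = ∑ j, c j ^ 2 := by
      exact Finset.sum_congr rfl fun j _ => (sq (c j)).symm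
    rw [h3] at h1
    rw [sq]
    linarith
  have hcs : S ^ 2 ≤ (t : ℝ) * ∑ j, c j ^ 2 := by
    simpa using sq_sum_le_card_mul_sum_sq (s := Finset.univ) (f := c)
  rw [hinner] at hcov
  have hsum_le : ∑ j, c j ^ 2 ≤ ε := by linarith
  have ht0 : (0:ℝ) ≤ t := Nat.cast_nonneg t
  have h5 : S ^ 2 ≤ (t : ℝ) * ε :=
    hcs.trans (mul_le_mul_of_nonneg_left hsum_le ht0)
  have key : 1 - ε ≤ 4 * θ ^ 2 * ε * t := by
    have h6 : 4 * θ ^ 2 * S ^ 2 ≤ 4 * θ ^ 2 * ((t : ℝ) * ε) :=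
      mul_le_mul_of_nonneg_left h5 (by positivity)
    nlinarith [hcov]
  constructor
  · rw [div_le_iff₀ (by positivity)]
    linarith
  · rw [div_le_iff₀ (by positivity)]
    nlinarith
end
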